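/- Suppose w_ins(a) = w_del(a) = 1 for all a ∈ Σ and w_sub(a,b) = 1 for all a ≠ b ∈ Σ (with w_sub(a,a) = 0). Then the exp-edit distance dist on ℝ⁺-exponent-strings is a metric: dist(p,p) = 0; dist(p,q) > 0 whenever p ≠ q; dist(p,q) = dist(q,p); and dist(p,r) ≤ dist(p,q) + dist(q,r) for all ℝ⁺-exponent-strings p, q, r. -/

import Mathlib

namespace ExpStr

variable {α S : Type*}

/-- Concatenation of exponent-string representations, merging the boundary
terms when the base characters coincide. -/
def eCat [DecidableEq α] (op : S → S → S) (p q : List (α × S)) : List (α × S) :=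
  match p.getLast?, q with
  | some (a, s), (b, t) :: q' =>
      if a = b then p.dropLast ++ (a, op s t) :: q' else p ++ q
  | _, _ => p ++ q

/-- The defining property of an `S`-exponent-string:
consecutive base characters differ. -/
def IsExp (l : List (α × S)) : Prop := l.Chain' (fun x y => x.1 ≠ y.1)

/-- The exponent-string corresponding to a representation. -/
def eRep [DecidableEq α] (op : S → S → S) : List (α × S) → List (α × S)
  | [] => []
  | x :: xs => eCat op [x] (eRep op xs)

end ExpStr

noncomputable section
namespace ExpStr
open MeasureTheory

variable {α : Type*}

/-- Length of an `ℝ⁺`-exponent-string: the sum of its exponents. -/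
def eLen (l : List (α × ℝ)) : ℝ := (l.map Prod.snd).sum

/-- `ℝ⁺`-exponent-strings: consecutive base characters differ and all
exponents are positive reals. -/
def RES (l : List (α × ℝ)) : Prop := IsExp l ∧ ∀ x ∈ l, 0 < x.2

/-- Concatenation of `ℝ⁺`-exponent-strings (exponents added at the boundary). -/
def rcat [DecidableEq α] (p q : List (α × ℝ)) : List (α × ℝ) :=
  eCat (· + ·) p q

/-- The `ℕ`-exponent-string (run-length encoding) corresponding to a word. -/
def ofWord [DecidableEq α] (w : List α) : List (α × ℝ) :=
  eRep (· + ·) (w.map fun a => (a, (1 : ℝ)))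

/-- Multiply every exponent by `k`. -/
def scaleE (k : ℝ) (l : List (α × ℝ)) : List (α × ℝ) :=
  l.map fun x => (x.1, k * x.2)

/-- The base character of the position `x` in an `ℝ⁺`-exponent-string. -/
def charAt [Inhabited α] : List (α × ℝ) → ℝ → α
  | [], _ => default
  | (a, s) :: t, x => if x < s then a else charAt t (x - s)

/-- A single exp-edit operation applied to an infix, with its cost:
insertion `λ → a^q`, deletion `a^q → λ`, or substitution `a^q → b^q`. -/
def Step [DecidableEq α] (wdel wins : α → ℝ) (wsub : α → α → ℝ)
    (u v : List (α × ℝ)) (c : ℝ) : Prop :=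
  ∃ p₁ p₂ : List (α × ℝ), RES p₁ ∧ RES p₂ ∧
    ((∃ a q, 0 < q ∧ u = rcat p₁ p₂ ∧ v = rcat p₁ (rcat [(a, q)] p₂) ∧
        c = q * wins a) ∨
     (∃ a q, 0 < q ∧ u = rcat p₁ (rcat [(a, q)] p₂) ∧ v = rcat p₁ p₂ ∧
        c = q * wdel a) ∨
     (∃ a b q, 0 < q ∧ u = rcat p₁ (rcat [(a, q)] p₂) ∧
        v = rcat p₁ (rcat [(b, q)] p₂) ∧ c = q * wsub a b))

/-- `EditCost wdel wins wsub u v c` holds iff there is a finite exp-edit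
sequence from `u` to `v` of total cost `c`. -/
inductive EditCost [DecidableEq α] (wdel wins : α → ℝ) (wsub : α → α → ℝ)
    (u : List (α × ℝ)) : List (α × ℝ) → ℝ → Prop
  | refl : EditCost wdel wins wsub u u 0
  | step {p q : List (α × ℝ)} {c c' : ℝ} :
      EditCost wdel wins wsub u p c → Step wdel wins wsub p q c' →
      EditCost wdel wins wsub u q (c + c')

/-- Exp-edit distance: the infimum cost of exp-edit sequences. -/
def eDist [DecidableEq α] (wdel wins : α → ℝ) (wsub : α → α → ℝ)
    (u v : List (α × ℝ)) : ℝ :=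
  sInf {c | EditCost wdel wins wsub u v c}

/-- Exp-edit sequences all of whose intermediate terms satisfy `P`. -/
inductive EditCostIn [DecidableEq α] (P : List (α × ℝ) → Prop)
    (wdel wins : α → ℝ) (wsub : α → α → ℝ)
    (u : List (α × ℝ)) : List (α × ℝ) → ℝ → Prop
  | refl : EditCostIn P wdel wins wsub u u 0
  | step {p q : List (α × ℝ)} {c c' : ℝ} :
      EditCostIn P wdel wins wsub u p c → Step wdel wins wsub p q c' → P q →
      EditCostIn P wdel wins wsub u q (c + c')

/-- All exponents are positive integers. -/
def IntExp (l : List (α × ℝ)) : Prop := ∀ x ∈ l, ∃ n : ℕ, x.2 = n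

/-- All exponents are (positive) rationals. -/
def RatExp (l : List (α × ℝ)) : Prop := ∀ x ∈ l, ∃ r : ℚ, x.2 = r

/-- A single classical string edit operation with its cost. -/
def SStep (wdel wins : α → ℝ) (wsub : α → α → ℝ) (u v : List α) (c : ℝ) : Prop :=
  ∃ p₁ p₂ : List α,
    ((∃ a, u = p₁ ++ p₂ ∧ v = p₁ ++ a :: p₂ ∧ c = wins a) ∨
     (∃ a, u = p₁ ++ a :: p₂ ∧ v = p₁ ++ p₂ ∧ c = wdel a) ∨
     (∃ a b, u = p₁ ++ a :: p₂ ∧ v = p₁ ++ b :: p₂ ∧ c = wsub a b))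

/-- Total costs of classical string edit sequences. -/
inductive SEditCost (wdel wins : α → ℝ) (wsub : α → α → ℝ) (u : List α) :
    List α → ℝ → Prop
  | refl : SEditCost wdel wins wsub u u 0
  | step {p q : List α} {c c' : ℝ} :
      SEditCost wdel wins wsub u p c → SStep wdel wins wsub p q c' →
      SEditCost wdel wins wsub u q (c + c')

/-- Classical string edit distance. -/
def sDist (wdel wins : α → ℝ) (wsub : α → α → ℝ) (u v : List α) : ℝ :=
  sInf {c | SEditCost wdel wins wsub u v c}

/-- X-projection of a diagonal segment `(x₀, y₀, t)`. -/
def mSegX (m : ℝ × ℝ × ℝ) : Set ℝ := Set.Ico m.1 (m.1 + m.2.2)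

/-- Y-projection of a diagonal segment `(x₀, y₀, t)`. -/
def mSegY (m : ℝ × ℝ × ℝ) : Set ℝ := Set.Ico m.2.1 (m.2.1 + m.2.2)

/-- X-projection of a matching. -/
def mEX (M : List (ℝ × ℝ × ℝ)) : Set ℝ := ⋃ m ∈ M, mSegX m

/-- Y-projection of a matching. -/
def mEY (M : List (ℝ × ℝ × ℝ)) : Set ℝ := ⋃ m ∈ M, mSegY m

/-- An exp-matching: a finite family of diagonal segments, each given as
`(x₀, y₀, t)` (start point and length parameter), lying in `[0,L₁)×[0,L₂)`,
with pairwise disjoint axis projections, and monotone. -/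
def IsMatching (L₁ L₂ : ℝ) (M : List (ℝ × ℝ × ℝ)) : Prop :=
  (∀ m ∈ M, 0 < m.2.2 ∧ 0 ≤ m.1 ∧ 0 ≤ m.2.1 ∧
      m.1 + m.2.2 ≤ L₁ ∧ m.2.1 + m.2.2 ≤ L₂) ∧
  M.Pairwise (fun m m' =>
      Disjoint (mSegX m) (mSegX m') ∧ Disjoint (mSegY m) (mSegY m')) ∧
  (∀ m ∈ M, ∀ m' ∈ M, ∀ s s' : ℝ, 0 ≤ s → s < m.2.2 → 0 ≤ s' → s' < m'.2.2 →
      m.1 + s < m'.1 + s' → m.2.1 + s ≤ m'.2.1 + s')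

/-- Cost of an exp-matching: deletion and insertion integrals over the
unmatched positions plus the substitution (arc-length) integral over the
segments (the factor `1/√2` cancels the speed `√2` of the parametrization). -/
def mCost [Inhabited α] (wdel wins : α → ℝ) (wsub : α → α → ℝ)
    (p₁ p₂ : List (α × ℝ)) (M : List (ℝ × ℝ × ℝ)) : ℝ :=
  (∫ x in Set.Ico 0 (eLen p₁) \ mEX M, wdel (charAt p₁ x)) +
  (∫ y in Set.Ico 0 (eLen p₂) \ mEY M, wins (charAt p₂ y)) +
  (M.map fun m => ∫ s in (0 : ℝ)..m.2.2,
      wsub (charAt p₁ (m.1 + s)) (charAt p₂ (m.2.1 + s))).sum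

end ExpStr
end

/-!
Reflexivity, symmetry and the triangle inequality come from the empty edit sequence, from
reversing a sequence (insertions and deletions trade places and the unit substitution weights are
symmetric) and from concatenating two sequences.

For positivity, fix `ψ : Σ → [-1, 1]` and `M : ℝ` and consider the functional
`l ↦ ∫_{[0, M)} ψ (l x) dx`. An operation of cost `q` acting at position `L` either changes the
characters on `[L, L + q)`, or inserts or deletes that interval and shifts the rest by `q`; either
way the functional moves by at most `2 q`, so it is `2`-Lipschitz for `dist`. Two different
`ℝ⁺`-exponent-strings are told apart by such a functional with `ψ` the indicator of a character:
compare their first runs that differ.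
-/

namespace ExpStr

variable {α : Type*}

lemma RES.tail {x : α × ℝ} {l : List (α × ℝ)} (h : RES (x :: l)) : RES l :=
  ⟨h.1.tail, fun y hy => h.2 y (List.mem_cons_of_mem _ hy)⟩

lemma RES.nonneg {l : List (α × ℝ)} (h : RES l) : ∀ x ∈ l, 0 ≤ x.2 :=
  fun x hx => (h.2 x hx).le

section Concatenation

variable [DecidableEq α]

lemma rcat_nil_left (l : List (α × ℝ)) : rcat [] l = l := by
  cases l <;> rfl

lemma rcat_singleton_of_isExp {a : α} {s : ℝ} {l : List (α × ℝ)} (h : IsExp ((a, s) :: l)) :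
    rcat [(a, s)] l = (a, s) :: l := by
  rcases l with _ | ⟨⟨b, t⟩, l⟩
  · rfl
  · simp [rcat, eCat, (List.isChain_cons_cons.1 h).1]

lemma rcat_eq_append_or (x y : List (α × ℝ)) :
    rcat x y = x ++ y ∨ ∃ x' a s t y', x = x' ++ [(a, s)] ∧ y = (a, t) :: y' ∧
      rcat x y = x' ++ (a, s + t) :: y' := by
  unfold rcat eCat
  rcases hx : x.getLast? with _ | ⟨a, s⟩ <;> rcases y with _ | ⟨⟨b, t⟩, y'⟩
  · exact Or.inl rfl
  · exact Or.inl rfl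
  · exact Or.inl rfl
  · obtain ⟨x', rfl⟩ := List.getLast?_eq_some_iff.1 hx
    by_cases hab : a = b
    · subst hab
      exact Or.inr ⟨x', a, s, t, y', rfl, rfl, by simp⟩
    · exact Or.inl (if_neg hab)

end Concatenation

section EditSequences

variable [DecidableEq α] {wdel wins : α → ℝ} {wsub : α → α → ℝ}
  {u v w p q r : List (α × ℝ)} {c c' : ℝ}

lemma Step.cost_nonneg (hdel : ∀ a, 0 ≤ wdel a) (hins : ∀ a, 0 ≤ wins a)
    (hsub : ∀ a b, 0 ≤ wsub a b) (h : Step wdel wins wsub u v c) : 0 ≤ c := by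
  rcases h with ⟨-, -, -, -, ⟨a, q, hq, -, -, rfl⟩ | ⟨a, q, hq, -, -, rfl⟩ |
    ⟨a, b, q, hq, -, -, rfl⟩⟩
  · exact mul_nonneg hq.le (hins a)
  · exact mul_nonneg hq.le (hdel a)
  · exact mul_nonneg hq.le (hsub a b)

lemma Step.symm (h : Step wdel wins wsub u v c) : Step wins wdel (flip wsub) v u c := by
  obtain ⟨p₁, p₂, h₁, h₂, ⟨a, q, hq, hu, hv, hc⟩ | ⟨a, q, hq, hu, hv, hc⟩ |
    ⟨a, b, q, hq, hu, hv, hc⟩⟩ := h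
  · exact ⟨p₁, p₂, h₁, h₂, Or.inr (Or.inl ⟨a, q, hq, hv, hu, hc⟩)⟩
  · exact ⟨p₁, p₂, h₁, h₂, Or.inl ⟨a, q, hq, hv, hu, hc⟩⟩
  · exact ⟨p₁, p₂, h₁, h₂, Or.inr (Or.inr ⟨b, a, q, hq, hv, hu, hc⟩)⟩

namespace EditCost

lemma of_step (h : Step wdel wins wsub u v c) : EditCost wdel wins wsub u v c := by
  simpa using refl.step h

lemma trans (h₁ : EditCost wdel wins wsub u v c) (h₂ : EditCost wdel wins wsub v w c') :
    EditCost wdel wins wsub u w (c + c') := by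
  induction h₂ with
  | refl => simpa using h₁
  | step _ hs ih => simpa only [add_assoc] using ih.step hs

lemma nonneg (hdel : ∀ a, 0 ≤ wdel a) (hins : ∀ a, 0 ≤ wins a) (hsub : ∀ a b, 0 ≤ wsub a b)
    (h : EditCost wdel wins wsub u v c) : 0 ≤ c := by
  induction h with
  | refl => exact le_rfl
  | step _ hs ih => exact add_nonneg ih (hs.cost_nonneg hdel hins hsub)

lemma symm (h : EditCost wdel wins wsub u v c) : EditCost wins wdel (flip wsub) v u c := by
  induction h with
  | refl => exact refl
  | step _ hs ih => simpa only [add_comm] using (of_step hs.symm).trans ih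

lemma to_nil (hp : RES p) :
    EditCost wdel wins wsub p [] (p.map fun x => x.2 * wdel x.1).sum := by
  induction p with
  | nil => exact refl
  | cons x l ih =>
    obtain ⟨a, s⟩ := x
    have hdel : Step wdel wins wsub ((a, s) :: l) l (s * wdel a) := by
      refine ⟨[], l, ⟨List.isChain_nil, by simp⟩, hp.tail,
        Or.inr (Or.inl ⟨a, s, hp.2 _ List.mem_cons_self, ?_, rcat_nil_left l, rfl⟩)⟩
      rw [rcat_nil_left, rcat_singleton_of_isExp hp.1]
    simpa using (of_step hdel).trans (ih hp.tail)

lemma abs_sub_le_mul {f : List (α × ℝ) → ℝ} {K : ℝ}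
    (hf : ∀ u v c, Step wdel wins wsub u v c → |f u - f v| ≤ K * c)
    (h : EditCost wdel wins wsub p q c) : |f p - f q| ≤ K * c := by
  induction h with
  | refl => simp
  | step _ hs ih =>
    calc |f p - f _| ≤ |f p - f _| + |f _ - f _| := _root_.abs_sub_le _ _ _
      _ ≤ K * _ + K * _ := add_le_add ih (hf _ _ _ hs)
      _ = K * (_ + _) := (mul_add _ _ _).symm

end EditCost

lemma nonempty_editCost (hp : RES p) (hq : RES q) : {c | EditCost wdel wins wsub p q c}.Nonempty :=
  ⟨_, (EditCost.to_nil hp).trans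
    (EditCost.to_nil (wdel := wins) (wins := wdel) (wsub := flip wsub) hq).symm⟩

lemma bddBelow_editCost (hdel : ∀ a, 0 ≤ wdel a) (hins : ∀ a, 0 ≤ wins a)
    (hsub : ∀ a b, 0 ≤ wsub a b) : BddBelow {c | EditCost wdel wins wsub u v c} :=
  ⟨0, fun _ h => h.nonneg hdel hins hsub⟩

lemma eDist_self (hdel : ∀ a, 0 ≤ wdel a) (hins : ∀ a, 0 ≤ wins a)
    (hsub : ∀ a b, 0 ≤ wsub a b) : eDist wdel wins wsub p p = 0 :=
  le_antisymm (csInf_le (bddBelow_editCost hdel hins hsub) EditCost.refl)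
    (le_csInf ⟨0, EditCost.refl⟩ fun _ h => h.nonneg hdel hins hsub)

lemma eDist_comm_flip : eDist wdel wins wsub u v = eDist wins wdel (flip wsub) v u :=
  congrArg sInf (Set.ext fun _ => ⟨EditCost.symm, EditCost.symm⟩)

lemma eDist_triangle (hdel : ∀ a, 0 ≤ wdel a) (hins : ∀ a, 0 ≤ wins a)
    (hsub : ∀ a b, 0 ≤ wsub a b) (hp : RES p) (hq : RES q) (hr : RES r) :
    eDist wdel wins wsub p r ≤ eDist wdel wins wsub p q + eDist wdel wins wsub q r := by
  have hbdd {u v : List (α × ℝ)} := bddBelow_editCost (u := u) (v := v) hdel hins hsub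
  unfold eDist
  rw [← csInf_add (nonempty_editCost hp hq) hbdd (nonempty_editCost hq hr) hbdd]
  refine csInf_le_csInf hbdd ((nonempty_editCost hp hq).add (nonempty_editCost hq hr)) ?_
  rintro _ ⟨c, hc, c', hc', rfl⟩
  exact hc.trans hc'

lemma abs_sub_le_mul_eDist {f : List (α × ℝ) → ℝ} {K : ℝ} (hK : 0 < K)
    (hf : ∀ u v c, Step wdel wins wsub u v c → |f u - f v| ≤ K * c) (hp : RES p) (hq : RES q) :
    |f p - f q| ≤ K * eDist wdel wins wsub p q := by
  rw [← div_le_iff₀' hK]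
  exact le_csInf (nonempty_editCost hp hq) fun c h => (div_le_iff₀' hK).2 (h.abs_sub_le_mul hf)

end EditSequences

/-- `prefixWeight ψ M l` is `∫ x in [0, M), ψ (charAt l x)`, the integrand being `0` beyond
`eLen l`. -/
def prefixWeight (ψ : α → ℝ) : ℝ → List (α × ℝ) → ℝ
  | _, [] => 0
  | M, (a, s) :: l => ψ a * (M⁺ - (M - s)⁺) + prefixWeight ψ (M - s) l

lemma posPart_sub_posPart_sub_le {x y s : ℝ} (hs : 0 ≤ s) (hxy : x ≤ y) :
    x⁺ - (x - s)⁺ ≤ y⁺ - (y - s)⁺ := by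
  simp only [posPart_def]
  rcases le_total x 0 with hx | hx <;> rcases le_total y 0 with hy | hy <;>
    rcases le_total (x - s) 0 with hx' | hx' <;> rcases le_total (y - s) 0 with hy' | hy' <;>
    simp only [sup_of_le_left, sup_of_le_right, hx, hy, hx', hy'] <;> linarith

section PrefixWeight

variable (ψ : α → ℝ)

lemma prefixWeight_append (x y : List (α × ℝ)) (M : ℝ) :
    prefixWeight ψ M (x ++ y) = prefixWeight ψ M x + prefixWeight ψ (M - eLen x) y := by
  induction x generalizing M with
  | nil => simp [prefixWeight, eLen]
  | cons x l ih =>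
    obtain ⟨a, s⟩ := x
    simp only [List.cons_append, prefixWeight, ih, eLen, List.map_cons, List.sum_cons,
      sub_add_eq_sub_sub, add_assoc]

lemma prefixWeight_rcat [DecidableEq α] (x y : List (α × ℝ)) (M : ℝ) :
    prefixWeight ψ M (rcat x y) = prefixWeight ψ M x + prefixWeight ψ (M - eLen x) y := by
  obtain h | ⟨x', a, s, t, y', rfl, rfl, h⟩ := rcat_eq_append_or x y
  · rw [h, prefixWeight_append]
  · simp only [h, prefixWeight_append, prefixWeight, eLen, List.map_append, List.sum_append,
      List.map_cons, List.map_nil, List.sum_cons, List.sum_nil]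
    ring_nf

lemma prefixWeight_rcat_singleton [DecidableEq α] (a : α) (q : ℝ) (l : List (α × ℝ)) (M : ℝ) :
    prefixWeight ψ M (rcat [(a, q)] l) = ψ a * (M⁺ - (M - q)⁺) + prefixWeight ψ (M - q) l := by
  simp [prefixWeight_rcat, prefixWeight, eLen]

variable {ψ} {l : List (α × ℝ)}

lemma prefixWeight_of_nonpos (hl : ∀ x ∈ l, 0 ≤ x.2) {M : ℝ} (hM : M ≤ 0) :
    prefixWeight ψ M l = 0 := by
  induction l generalizing M with
  | nil => rfl
  | cons x l ih =>
    have hs := hl x List.mem_cons_self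
    simp only [prefixWeight, posPart_eq_zero.2 hM, posPart_eq_zero.2 (show M - x.2 ≤ 0 by linarith),
      sub_zero, mul_zero, zero_add]
    exact ih (fun y hy => hl y (List.mem_cons_of_mem _ hy)) (by linarith)

lemma prefixWeight_cons_of_le (hl : ∀ x ∈ l, 0 ≤ x.2) {a : α} {s M : ℝ} (hM : M ≤ s) :
    prefixWeight ψ M ((a, s) :: l) = ψ a * M⁺ := by
  rw [prefixWeight, prefixWeight_of_nonpos hl (by linarith),
    posPart_eq_zero.2 (show M - s ≤ 0 by linarith)]
  ring

/-- The sharper bound `M⁺ - M'⁺` (rather than `M - M'`) is what makes the induction go through. -/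
lemma abs_prefixWeight_sub_le (hψ : ∀ a, |ψ a| ≤ 1) (hl : ∀ x ∈ l, 0 ≤ x.2) {M M' : ℝ}
    (h : M' ≤ M) : |prefixWeight ψ M l - prefixWeight ψ M' l| ≤ M⁺ - M'⁺ := by
  induction l generalizing M M' with
  | nil => simpa [prefixWeight] using posPart_mono h
  | cons x l ih =>
    obtain ⟨a, s⟩ := x
    have hs : 0 ≤ s := hl _ List.mem_cons_self
    have hhead : 0 ≤ (M⁺ - (M - s)⁺) - (M'⁺ - (M' - s)⁺) :=
      sub_nonneg.2 (posPart_sub_posPart_sub_le hs h)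
    have htail := ih (fun y hy => hl y (List.mem_cons_of_mem _ hy)) (sub_le_sub_right h s)
    calc |prefixWeight ψ M ((a, s) :: l) - prefixWeight ψ M' ((a, s) :: l)|
        = |ψ a * ((M⁺ - (M - s)⁺) - (M'⁺ - (M' - s)⁺)) +
            (prefixWeight ψ (M - s) l - prefixWeight ψ (M' - s) l)| := by
          simp only [prefixWeight]; ring_nf
      _ ≤ |ψ a| * ((M⁺ - (M - s)⁺) - (M'⁺ - (M' - s)⁺)) + ((M - s)⁺ - (M' - s)⁺) := by
          grw [abs_add_le, abs_mul, abs_of_nonneg hhead, htail]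
      _ ≤ M⁺ - M'⁺ := by nlinarith [hψ a]

lemma abs_posPart_sub_posPart_sub_le {M q : ℝ} (hq : 0 ≤ q) : |M⁺ - (M - q)⁺| ≤ q := by
  have h := abs_sup_sub_sup_le_abs M (M - q) 0
  rwa [sub_sub_cancel, abs_of_nonneg hq] at h

lemma abs_prefixWeight_rcat_insert_sub_le [DecidableEq α] (hψ : ∀ a, |ψ a| ≤ 1)
    (p₁ p₂ : List (α × ℝ)) (hp₂ : ∀ x ∈ p₂, 0 ≤ x.2) (a : α) {q : ℝ} (hq : 0 ≤ q) (M : ℝ) :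
    |prefixWeight ψ M (rcat p₁ (rcat [(a, q)] p₂)) - prefixWeight ψ M (rcat p₁ p₂)| ≤ 2 * q := by
  rw [prefixWeight_rcat ψ p₁, prefixWeight_rcat ψ p₁, prefixWeight_rcat_singleton]
  set N := M - eLen p₁
  have hshift : |prefixWeight ψ N p₂ - prefixWeight ψ (N - q) p₂| ≤ q :=
    (abs_prefixWeight_sub_le hψ hp₂ (by linarith)).trans
      ((le_abs_self _).trans (abs_posPart_sub_posPart_sub_le hq))
  have hrun : |ψ a * (N⁺ - (N - q)⁺)| ≤ q := by
    rw [abs_mul]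
    exact (mul_le_of_le_one_left (abs_nonneg _) (hψ a)).trans (abs_posPart_sub_posPart_sub_le hq)
  calc _ = |ψ a * (N⁺ - (N - q)⁺) - (prefixWeight ψ N p₂ - prefixWeight ψ (N - q) p₂)| := by
        congr 1; ring
    _ ≤ q + q := (abs_sub _ _).trans (add_le_add hrun hshift)
    _ = 2 * q := by ring

lemma abs_prefixWeight_rcat_subst_sub_le [DecidableEq α] (hψ : ∀ a, |ψ a| ≤ 1)
    (p₁ p₂ : List (α × ℝ)) (a b : α) {q : ℝ} (hq : 0 ≤ q) (M : ℝ) :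
    |prefixWeight ψ M (rcat p₁ (rcat [(a, q)] p₂)) -
      prefixWeight ψ M (rcat p₁ (rcat [(b, q)] p₂))| ≤ 2 * (q * if a = b then 0 else 1) := by
  rw [prefixWeight_rcat ψ p₁, prefixWeight_rcat ψ p₁, prefixWeight_rcat_singleton,
    prefixWeight_rcat_singleton]
  split_ifs with hab
  · simp [hab]
  set N := M - eLen p₁
  calc _ = |ψ a - ψ b| * |N⁺ - (N - q)⁺| := by rw [← abs_mul]; ring_nf
    _ ≤ 2 * q := mul_le_mul ((abs_sub _ _).trans (by linarith [hψ a, hψ b]))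
        (abs_posPart_sub_posPart_sub_le hq) (abs_nonneg _) zero_le_two
    _ = 2 * (q * 1) := by ring

lemma Step.abs_prefixWeight_sub_le [DecidableEq α] (hψ : ∀ a, |ψ a| ≤ 1) (M : ℝ)
    {u v : List (α × ℝ)} {c : ℝ}
    (h : Step (fun _ => (1 : ℝ)) (fun _ => (1 : ℝ)) (fun a b => if a = b then (0 : ℝ) else 1)
      u v c) :
    |prefixWeight ψ M u - prefixWeight ψ M v| ≤ 2 * c := by
  obtain ⟨p₁, p₂, -, hp₂, ⟨a, q, hq, rfl, rfl, rfl⟩ | ⟨a, q, hq, rfl, rfl, rfl⟩ |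
    ⟨a, b, q, hq, rfl, rfl, rfl⟩⟩ := h
  · rw [abs_sub_comm, mul_one]
    exact abs_prefixWeight_rcat_insert_sub_le hψ p₁ p₂ hp₂.nonneg a hq.le M
  · rw [mul_one]
    exact abs_prefixWeight_rcat_insert_sub_le hψ p₁ p₂ hp₂.nonneg a hq.le M
  · exact abs_prefixWeight_rcat_subst_sub_le hψ p₁ p₂ a b hq.le M

end PrefixWeight

section Separation

variable [DecidableEq α]

lemma abs_pi_single_one_le (c a : α) : |(Pi.single c (1 : ℝ) : α → ℝ) a| ≤ 1 := by
  rw [Pi.single_apply]; split_ifs <;> simp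

lemma exists_prefixWeight_nil_ne {q : List (α × ℝ)} (hq : RES q) (hne : q ≠ []) :
    ∃ c M, prefixWeight (Pi.single c 1) M [] ≠ prefixWeight (Pi.single c 1) M q := by
  obtain ⟨⟨b, t⟩, q, rfl⟩ := List.exists_cons_of_ne_nil hne
  have ht := hq.2 _ List.mem_cons_self
  refine ⟨b, t, ?_⟩
  rw [prefixWeight_cons_of_le hq.tail.nonneg le_rfl, Pi.single_eq_same, one_mul,
    posPart_eq_self.2 ht.le]
  exact ht.ne

lemma exists_prefixWeight_ne_of_lt {a : α} {s t : ℝ} {p q : List (α × ℝ)}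
    (hp : RES ((a, s) :: p)) (hq : ∀ x ∈ q, 0 ≤ x.2) (hst : s < t) :
    ∃ c M, prefixWeight (Pi.single c 1) M ((a, s) :: p) ≠
      prefixWeight (Pi.single c 1) M ((a, t) :: q) := by
  have hs := hp.2 _ List.mem_cons_self
  -- Past its first run, `p` has no `a` on an initial stretch of positive length `m ≤ t - s`.
  obtain ⟨m, hm, hmt, hpm⟩ : ∃ m, 0 < m ∧ m ≤ t - s ∧ prefixWeight (Pi.single a 1) m p = 0 := by
    rcases p with _ | ⟨⟨a', s'⟩, p⟩
    · exact ⟨t - s, by linarith, le_rfl, rfl⟩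
    · refine ⟨min s' (t - s), lt_min (hp.2 (a', s') (by simp)) (by linarith), min_le_right _ _, ?_⟩
      rw [prefixWeight_cons_of_le hp.tail.tail.nonneg (min_le_left _ _),
        Pi.single_eq_of_ne (List.isChain_cons_cons.1 hp.1).1.symm, zero_mul]
  refine ⟨a, s + m, ?_⟩
  rw [prefixWeight, add_sub_cancel_left, hpm, prefixWeight_cons_of_le hq (by linarith),
    Pi.single_eq_same, posPart_eq_self.2 (by linarith), posPart_eq_self.2 hm.le]
  intro h
  linarith

lemma exists_prefixWeight_ne : ∀ {p q : List (α × ℝ)}, RES p → RES q → p ≠ q →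
    ∃ c M, prefixWeight (Pi.single c 1) M p ≠ prefixWeight (Pi.single c 1) M q
  | [], [], _, _, hne => (hne rfl).elim
  | [], _ :: _, _, hq, _ => exists_prefixWeight_nil_ne hq (List.cons_ne_nil _ _)
  | _ :: _, [], hp, _, _ =>
    (exists_prefixWeight_nil_ne hp (List.cons_ne_nil _ _)).imp fun _ => Exists.imp fun _ => Ne.symm
  | (a, s) :: p, (b, t) :: q, hp, hq, hne => by
    have hs := hp.2 _ List.mem_cons_self
    have ht := hq.2 _ List.mem_cons_self
    by_cases hab : a = b
    · subst hab
      rcases lt_trichotomy s t with hst | rfl | hst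
      · exact exists_prefixWeight_ne_of_lt hp hq.tail.nonneg hst
      · obtain ⟨c, M, h⟩ := exists_prefixWeight_ne hp.tail hq.tail fun h => hne (h ▸ rfl)
        refine ⟨c, M + s, ?_⟩
        simpa [prefixWeight] using h
      · exact (exists_prefixWeight_ne_of_lt hq hp.tail.nonneg hst).imp
          fun _ => Exists.imp fun _ => Ne.symm
    · refine ⟨a, min s t, ?_⟩
      rw [prefixWeight_cons_of_le hp.tail.nonneg (min_le_left _ _),
        prefixWeight_cons_of_le hq.tail.nonneg (min_le_right _ _), Pi.single_eq_same,
        Pi.single_eq_of_ne (Ne.symm hab), posPart_eq_self.2 (le_min hs.le ht.le)]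
      simpa using (lt_min hs ht).ne'

end Separation

end ExpStr

open ExpStr in
/-- With unit costs (`w_ins = w_del = 1`, `w_sub(a,b) = 1` for `a ≠ b` and
`w_sub(a,a) = 0`) the exp-edit distance is a metric on `ℝ⁺`-exponent-strings. -/
theorem eDist_metric {α : Type*} [DecidableEq α]
    (p q r : List (α × ℝ)) (hp : RES p) (hq : RES q) (hr : RES r) :
    eDist (fun _ => (1 : ℝ)) (fun _ => (1 : ℝ))
        (fun a b => if a = b then (0 : ℝ) else 1) p p = 0 ∧
    (p ≠ q → 0 < eDist (fun _ => (1 : ℝ)) (fun _ => (1 : ℝ))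
        (fun a b => if a = b then (0 : ℝ) else 1) p q) ∧
    eDist (fun _ => (1 : ℝ)) (fun _ => (1 : ℝ))
        (fun a b => if a = b then (0 : ℝ) else 1) p q =
      eDist (fun _ => (1 : ℝ)) (fun _ => (1 : ℝ))
        (fun a b => if a = b then (0 : ℝ) else 1) q p ∧
    eDist (fun _ => (1 : ℝ)) (fun _ => (1 : ℝ))
        (fun a b => if a = b then (0 : ℝ) else 1) p r ≤
      eDist (fun _ => (1 : ℝ)) (fun _ => (1 : ℝ))
          (fun a b => if a = b then (0 : ℝ) else 1) p q +
        eDist (fun _ => (1 : ℝ)) (fun _ => (1 : ℝ))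
          (fun a b => if a = b then (0 : ℝ) else 1) q r := by
  have hunit : ∀ _ : α, (0 : ℝ) ≤ 1 := fun _ => zero_le_one
  have hsub : ∀ a b : α, (0 : ℝ) ≤ if a = b then 0 else 1 := fun a b => by split_ifs <;> norm_num
  refine ⟨eDist_self hunit hunit hsub, fun hne => ?_, ?_, eDist_triangle hunit hunit hsub hp hq hr⟩
  · obtain ⟨c, M, hc⟩ := exists_prefixWeight_ne hp hq hne
    have hlip := abs_sub_le_mul_eDist two_pos
      (fun _ _ _ => Step.abs_prefixWeight_sub_le (abs_pi_single_one_le c) M) hp hq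
    linarith [abs_pos.2 (sub_ne_zero.2 hc)]
  · have hflip : flip (fun a b : α => if a = b then (0 : ℝ) else 1) =
        fun a b => if a = b then 0 else 1 := by
      funext a b
      simp only [flip, eq_comm]
    rw [eDist_comm_flip, hflip]
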